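/- arXiv:1303.2462 — 4 statements merged into one kernel-verified Lean document; each statement's English description precedes it below -/
import Mathlib

section
/- Let X be a subshift over Σ in dimension 2 defined by a finite family of forbidden patterns. If X contains a configuration c with periodicity vector (m,n) where m ≥ n > 0 and m,n are integers, then X contains a configuration c' that is fully periodic, i.e., Γ_{c'} has finite index in ℤ². -/
/-!
A configuration `c` with period `(m, n)`, `n > 0`, is determined by its restriction to the strip
`ℤ × [0, n)`, i.e. by a bi-infinite word `w` over the finite alphabet of columns, and every such
word gives back an `(m, n)`-periodic configuration. Each `D`-pattern of the configuration reads
only a window of `w` of bounded length `L`. By pigeonhole some length-`L` window of `w` repeats at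
a distance `q > 0`; the `q`-periodic word repeating the stretch between the two occurrences has all
its length-`L` windows occurring in `w`, so the configuration built from it still avoids `F`, and
it has the periods `(q, 0)` and `(m, n)`, hence `(q * n, 0)` and `(0, q * n)`.
-/

open Function

def sft {G A : Type*} [Add G] (D : Finset G) (F : Set (D → A)) : Set (G → A) :=
  {c | ∀ t : G, (fun z : D => c (t + z.1)) ∉ F}

theorem mem_sft_of_forall_exists_eq {G A : Type*} [Add G] {D : Finset G} {F : Set (D → A)}
    {c c' : G → A} (hc : c ∈ sft D F) (h : ∀ t, ∃ s, ∀ z ∈ D, c' (t + z) = c (s + z)) :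
    c' ∈ sft D F := by
  intro t
  obtain ⟨s, hs⟩ := h t
  have hpat : (fun z : D => c' (t + z.1)) = fun z : D => c (s + z.1) := funext fun z => hs z z.2
  rw [hpat]
  exact hc s

theorem Int.abs_add_ediv_sub_ediv_le (a b n : ℤ) : |(a + b) / n - a / n| ≤ |b| := by
  wlog hn : 0 < n generalizing n
  · rcases (not_lt.1 hn).lt_or_eq with hn | rfl
    · have := this (-n) (by omega)
      rwa [Int.ediv_neg, Int.ediv_neg, neg_sub_neg, abs_sub_comm] at this
    · simp
  have h₁ := Int.emod_add_mul_ediv a n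
  have h₂ := Int.emod_add_mul_ediv (a + b) n
  have := Int.emod_nonneg a hn.ne'
  have := Int.emod_nonneg (a + b) hn.ne'
  have := Int.emod_lt_of_pos a hn
  have := Int.emod_lt_of_pos (a + b) hn
  rw [abs_le]
  constructor <;> by_contra! h <;> cases abs_cases b <;> nlinarith

section Periodize

variable {β : Type*}

theorem exists_window_repeats [Finite β] (w : ℤ → β) (L : ℤ) :
    ∃ k q, 0 < q ∧ ∀ i, 0 ≤ i → i < L → w (k + i + q) = w (k + i) := by
  obtain ⟨a, -, b, -, hab, h⟩ := Set.infinite_univ.exists_lt_map_eq_of_mapsTo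
    (f := fun k : ℤ => fun i : Finset.Ico 0 L => w (k + i)) (Set.mapsTo_univ _ _) Set.finite_univ
  refine ⟨a, b - a, by omega, fun i h₀ hL => ?_⟩
  have := congrFun h ⟨i, Finset.mem_Ico.2 ⟨h₀, hL⟩⟩
  rw [show a + i + (b - a) = b + i by ring]
  exact this.symm

def periodize (w : ℤ → β) (k q x : ℤ) : β := w (k + (x - k) % q)

theorem periodize_periodic (w : ℤ → β) (k q : ℤ) : Periodic (periodize w k q) q := by
  intro x
  simp only [periodize]
  rw [show x + q - k = x - k + 1 * q by ring, Int.add_mul_emod_self_right]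

theorem periodize_eq_of_window {w : ℤ → β} {k q L : ℤ} (hq : 0 < q)
    (hw : ∀ i, 0 ≤ i → i < L → w (k + i + q) = w (k + i)) {x : ℤ} (hk : k ≤ x)
    (hx : x < k + L + q) : periodize w k q x = w x := by
  have shift : ∀ j : ℕ, ∀ y, k ≤ y → y + j * q < k + L + q → w (y + j * q) = w y := by
    intro j
    induction j with
    | zero => simp
    | succ j ih =>
      intro y hy hyL
      push_cast at hyL ⊢
      have hj : 0 ≤ (j : ℤ) * q := by positivity
      rw [show y + (j + 1) * q = k + (y + j * q - k) + q by ring,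
        hw _ (by linarith) (by linarith), show k + (y + j * q - k) = y + j * q by ring]
      exact ih y hy (by linarith)
  have hd : 0 ≤ (x - k) / q := Int.ediv_nonneg (by omega) hq.le
  have hx' : x = k + (x - k) % q + ((x - k) / q).toNat * q := by
    rw [Int.toNat_of_nonneg hd]; linarith [Int.emod_add_mul_ediv (x - k) q]
  have := Int.emod_nonneg (x - k) hq.ne'
  have h := shift ((x - k) / q).toNat (k + (x - k) % q) (by omega) (by rw [← hx']; exact hx)
  rw [← hx'] at h
  exact h.symm

theorem exists_periodic_forall_window_occurs [Finite β] (w : ℤ → β) (L : ℤ) :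
    ∃ w' : ℤ → β, ∃ q, 0 < q ∧ Periodic w' q ∧
      ∀ x, ∃ y, ∀ i, 0 ≤ i → i < L → w' (x + i) = w (y + i) := by
  obtain ⟨k, q, hq, hw⟩ := exists_window_repeats w L
  refine ⟨periodize w k q, q, hq, periodize_periodic w k q,
    fun x => ⟨k + (x - k) % q, fun i h₀ hL => ?_⟩⟩
  have := Int.emod_nonneg (x - k) hq.ne'
  have := Int.emod_lt_of_pos (x - k) hq
  rw [← periodize_eq_of_window hq hw (by omega) (by omega),
    show x + i = k + (x - k) % q + i + ((x - k) / q) • q by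
      rw [smul_eq_mul]; linarith [Int.emod_add_mul_ediv (x - k) q],
    (periodize_periodic w k q).zsmul]

end Periodize

section Columns

variable {A : Type*} (m : ℤ) (n : ℕ)

/- `ofColumns m n w` is the `(m, n)`-periodic configuration whose strip `ℤ × [0, n)` has column
`x` equal to `w x`; the point `z` is a copy of the point of that strip in column
`columnIndex m n z`. -/
def columnIndex (z : ℤ × ℤ) : ℤ := z.1 - m * (z.2 / n)

def ofColumns (w : ℤ → ZMod n → A) (z : ℤ × ℤ) : A := w (columnIndex m n z) z.2

theorem eq_ofColumns [NeZero n] {c : ℤ × ℤ → A} (hc : Periodic c (m, n)) :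
    c = ofColumns m n (fun x j => c (x, j.val)) := by
  funext ⟨x, y⟩
  rw [← hc.zsmul (-(y / n)) (x, y)]
  simp only [ofColumns, columnIndex, ZMod.val_intCast, Int.emod_def]
  congr 1
  ext <;> simp <;> ring

theorem ofColumns_periodic [NeZero n] (w : ℤ → ZMod n → A) :
    Periodic (ofColumns m n w) (m, n) := by
  rintro ⟨x, y⟩
  have hdiv : (y + n) / n = y / n + 1 := by
    simpa using Int.add_mul_ediv_right y 1 (Int.natCast_ne_zero.2 (NeZero.ne n))
  simp only [ofColumns, columnIndex, Prod.mk_add_mk, Int.cast_add, Int.cast_natCast,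
    ZMod.natCast_self, add_zero, hdiv]
  congr 1
  ring

theorem Function.Periodic.ofColumns {w : ℤ → ZMod n → A} {q : ℤ} (h : Periodic w q) :
    Periodic (ofColumns m n w) (q, 0) := by
  rintro ⟨x, y⟩
  simp only [_root_.ofColumns, columnIndex, Prod.mk_add_mk, add_zero]
  rw [show x + q - m * (y / n) = x - m * (y / n) + q by ring, h]

theorem abs_columnIndex_add_sub_le (t z : ℤ × ℤ) :
    |columnIndex m n (t + z) - columnIndex m n t| ≤ |z.1| + |m| * |z.2| :=
  calc |columnIndex m n (t + z) - columnIndex m n t|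
      = |z.1 - m * ((t.2 + z.2) / n - t.2 / n)| := by
        simp only [columnIndex, Prod.fst_add, Prod.snd_add]; ring_nf
    _ ≤ |z.1| + |m| * |(t.2 + z.2) / n - t.2 / n| := by rw [← abs_mul]; exact abs_sub _ _
    _ ≤ |z.1| + |m| * |z.2| :=
        add_le_add le_rfl (mul_le_mul_of_nonneg_left (Int.abs_add_ediv_sub_ediv_le _ _ _)
          (abs_nonneg m))

theorem ofColumns_mem_sft {D : Finset (ℤ × ℤ)} {F : Set (D → A)} {w w' : ℤ → ZMod n → A}
    {R L : ℤ} (hw : ofColumns m n w ∈ sft D F) (hR : ∀ z ∈ D, |z.1| ≤ R ∧ |z.2| ≤ R)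
    (hL : 2 * (R + |m| * R) < L) (hw' : ∀ x, ∃ y, ∀ i, 0 ≤ i → i < L → w' (x + i) = w (y + i)) :
    ofColumns m n w' ∈ sft D F := by
  refine mem_sft_of_forall_exists_eq hw fun t => ?_
  -- the pattern at `t` only reads columns within `R + |m| * R` of `columnIndex m n t`
  set x₀ := columnIndex m n t - (R + |m| * R)
  obtain ⟨y, hy⟩ := hw' x₀
  refine ⟨(t.1 + (y - x₀), t.2), fun z hz => ?_⟩
  obtain ⟨h₁, h₂⟩ := hR z hz
  have hm : |m| * |z.2| ≤ |m| * R := by gcongr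
  have hi := abs_le.1 (abs_columnIndex_add_sub_le m n t z)
  have hcol := hy (columnIndex m n (t + z) - x₀) (by linarith) (by linarith)
  rw [add_sub_cancel] at hcol
  simp only [ofColumns, hcol]
  congr 1
  simp only [columnIndex, Prod.fst_add, Prod.snd_add]
  ring

end Columns

theorem sft_per_vector_imp_fully_periodic_general {A : Type*} [Fintype A]
    (D : Finset (ℤ × ℤ)) (F : Set ({p : ℤ × ℤ // p ∈ D} → A))
    (X : Set ((ℤ × ℤ) → A))
    (hX : X = {c | ∀ t : ℤ × ℤ, (fun z : {p : ℤ × ℤ // p ∈ D} => c (t + z.1)) ∉ F})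
    (m n : ℤ) (hn : 0 < n)
    (c : (ℤ × ℤ) → A) (hc : c ∈ X) (hper : ∀ z, c (z + (m, n)) = c z) :
    ∃ c' ∈ X, ∃ p : ℤ, 0 < p ∧
      (∀ z, c' (z + (p, 0)) = c' z) ∧ (∀ z, c' (z + (0, p)) = c' z) := by
  subst hX
  lift n to ℕ using hn.le
  have : NeZero n := ⟨by omega⟩
  obtain ⟨R, hR⟩ : ∃ R : ℤ, ∀ z ∈ D, |z.1| ≤ R ∧ |z.2| ≤ R := by
    obtain ⟨R, hR⟩ := (D.image fun z => max |z.1| |z.2|).exists_le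
    exact ⟨R, fun z hz => max_le_iff.1 (hR _ (Finset.mem_image_of_mem _ hz))⟩
  obtain ⟨w', q, hq, hw'q, hw'⟩ := exists_periodic_forall_window_occurs
    (fun x (j : ZMod n) => c (x, j.val)) (2 * (R + |m| * R) + 1)
  rw [eq_ofColumns m n hper] at hc
  refine ⟨ofColumns m n w', ofColumns_mem_sft m n hc hR (lt_add_one _) hw', q * n,
    by positivity, ?_, ?_⟩
  · have h := (hw'q.ofColumns m n).nsmul n
    rwa [show n • (q, (0 : ℤ)) = (q * n, 0) by ext <;> simp [mul_comm]] at h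
  · have h := ((ofColumns_periodic m n w').zsmul q).sub_period ((hw'q.ofColumns m n).zsmul m)
    rwa [show q • (m, (n : ℤ)) - m • (q, 0) = (0, q * n) by ext <;> simp; ring] at h

/-- A 2D SFT containing a configuration with periodicity vector `(m,n)`,
`m ≥ n > 0`, contains a fully periodic configuration. -/
theorem sft_per_vector_imp_fully_periodic {A : Type*} [Fintype A]
    (D : Finset (ℤ × ℤ)) (F : Set ({p : ℤ × ℤ // p ∈ D} → A))
    (X : Set ((ℤ × ℤ) → A))
    (hX : X = {c | ∀ t : ℤ × ℤ, (fun z : {p : ℤ × ℤ // p ∈ D} => c (t + z.1)) ∉ F})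
    (m n : ℤ) (hn : 0 < n) (hnm : n ≤ m)
    (c : (ℤ × ℤ) → A) (hc : c ∈ X) (hper : ∀ z, c (z + (m, n)) = c z) :
    ∃ c' ∈ X, ∃ p : ℤ, 0 < p ∧
      (∀ z, c' (z + (p, 0)) = c' z) ∧ (∀ z, c' (z + (0, p)) = c' z) :=
  sft_per_vector_imp_fully_periodic_general D F X hX m n hn c hc hper
end

section
/- With the reflected n-ary code val as above, for any t ∈ {0,…,n-1}^d with val(t) < n^d - 1, the vector t' with val(t') = val(t) + 1 differs from t in exactly one coordinate, and in that coordinate it differs by exactly 1 (i.e., |tᵢ - t'ᵢ| = 1 for the unique differing index i). -/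
/-!
Peeling off the lowest coordinate, `grayVal (Fin.cons a s) = r + n * grayVal s`, where the digit
`r` is `a` or its reflection `n - 1 - a` according to the parity of `∑ s`. Incrementing the code
either increments `r` with `s` fixed, which moves `a` by one step, or carries: `r` wraps from
`n - 1` to `0` while `grayVal s` increases by one. In the carry case `s` moves by one step by
induction, so the parity of `∑ s` flips, and the reflection keeps `a` fixed.
-/

def grayVal (n d : ℕ) (t : Fin d → Fin n) : ℕ :=
  ∑ i : Fin d,
    (if Even (∑ j ∈ Finset.univ.filter (fun j => i < j), (t j : ℕ))
      then (t i : ℕ) else n - 1 - (t i : ℕ)) * n ^ (i : ℕ)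

open Finset

variable {n : ℕ}

def GridAdj {d : ℕ} (t t' : Fin d → Fin n) : Prop :=
  ∃ i : Fin d, (∀ j : Fin d, j ≠ i → t j = t' j) ∧
    (((t i : ℤ) - (t' i : ℤ) = 1) ∨ ((t' i : ℤ) - (t i : ℤ) = 1))

namespace GridAdj

variable {d : ℕ} {t t' : Fin d → Fin n}

theorem cons_left (a : Fin n) (h : GridAdj t t') :
    GridAdj (Fin.cons a t : Fin (d + 1) → Fin n) (Fin.cons a t') := by
  obtain ⟨i, hsame, hstep⟩ := h
  refine ⟨i.succ, fun j hj => ?_, by simpa using hstep⟩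
  cases j using Fin.cases with
  | zero => rfl
  | succ j => simpa using hsame j (by rintro rfl; exact hj rfl)

theorem cons_right {a a' : Fin n} (s : Fin d → Fin n)
    (h : (a : ℤ) - a' = 1 ∨ (a' : ℤ) - a = 1) :
    GridAdj (Fin.cons a s : Fin (d + 1) → Fin n) (Fin.cons a' s) := by
  refine ⟨0, fun j hj => ?_, by simpa using h⟩
  cases j using Fin.cases with
  | zero => exact absurd rfl hj
  | succ j => rfl

theorem even_sum_iff_not (h : GridAdj t t') :
    Even (∑ j, (t j : ℕ)) ↔ ¬Even (∑ j, (t' j : ℕ)) := by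
  obtain ⟨i, hsame, hstep⟩ := h
  have hdiff : ∑ j, ((t' j : ℤ) - t j) = (t' i : ℤ) - t i :=
    sum_eq_single i (fun j _ hj => by rw [hsame j hj, sub_self]) (by simp)
  rw [sum_sub_distrib] at hdiff
  rw [← Int.even_coe_nat, ← Int.even_coe_nat]
  push_cast
  rcases hstep with hstep | hstep
  · rw [show ∑ j, (t j : ℤ) = ∑ j, (t' j : ℤ) + 1 by omega, Int.even_add_one]
  · rw [show ∑ j, (t' j : ℤ) = ∑ j, (t j : ℤ) + 1 by omega, Int.even_add_one, not_not]

end GridAdj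

/-- The paper's `aᵢ`, for `tᵢ = a` and `p = ∑_{j>i} tⱼ`. -/
def reflectDigit (n p a : ℕ) : ℕ :=
  if Even p then a else n - 1 - a

section reflectDigit

variable {p a a' : ℕ}

theorem reflectDigit_lt (ha : a < n) : reflectDigit n p a < n := by
  unfold reflectDigit; split_ifs <;> omega

theorem reflectDigit_inj (ha : a < n) (ha' : a' < n)
    (h : reflectDigit n p a = reflectDigit n p a') : a = a' := by
  unfold reflectDigit at h; split_ifs at h <;> omega

theorem reflectDigit_eq_succ (ha : a < n) (ha' : a' < n)
    (h : reflectDigit n p a' = reflectDigit n p a + 1) :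
    (a : ℤ) - a' = 1 ∨ (a' : ℤ) - a = 1 := by
  unfold reflectDigit at h; split_ifs at h <;> omega

theorem reflectDigit_wrap {p' : ℕ} (ha : a < n) (ha' : a' < n) (hp : Even p ↔ ¬Even p')
    (htop : reflectDigit n p a + 1 = n) (hbot : reflectDigit n p' a' = 0) : a = a' := by
  unfold reflectDigit at htop hbot; split_ifs at htop hbot <;> first | omega | tauto

end reflectDigit

theorem sum_filter_succ_lt {M : Type*} [AddCommMonoid M] {d : ℕ} (f : Fin (d + 1) → M)
    (i : Fin d) :
    ∑ j ∈ univ.filter (fun j => i.succ < j), f j =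
      ∑ j ∈ univ.filter (fun j : Fin d => i < j), f j.succ := by
  simp only [sum_filter, Fin.sum_univ_succ, Fin.succ_lt_succ_iff, Fin.not_lt_zero, if_false,
    zero_add]

theorem sum_filter_zero_lt {M : Type*} [AddCommMonoid M] {d : ℕ} (f : Fin (d + 1) → M) :
    ∑ j ∈ univ.filter (fun j => 0 < j), f j = ∑ j : Fin d, f j.succ := by
  simp only [sum_filter, Fin.sum_univ_succ, lt_self_iff_false, Fin.succ_pos, if_false, if_true,
    zero_add]

theorem grayVal_cons {d : ℕ} (a : Fin n) (s : Fin d → Fin n) :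
    grayVal n (d + 1) (Fin.cons a s) =
      reflectDigit n (∑ j, (s j : ℕ)) a + n * grayVal n d s := by
  simp only [grayVal, Fin.sum_univ_succ, sum_filter_zero_lt, sum_filter_succ_lt, Fin.cons_zero,
    Fin.cons_succ, Fin.val_zero, pow_zero, mul_one, Fin.val_succ, pow_succ, mul_sum, reflectDigit]
  congr 1
  refine sum_congr rfl fun i _ => ?_
  ring

theorem eq_and_eq_of_add_mul_eq {r r' q q' : ℕ} (hr : r < n) (hr' : r' < n)
    (h : r + n * q = r' + n * q') : r = r' ∧ q = q' := by
  have hn : 0 < n := by omega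
  obtain ⟨hq, hr⟩ := (Nat.div_mod_unique hn).2 ⟨h, hr⟩
  obtain ⟨hq', hr'⟩ := (Nat.div_mod_unique hn).2 ⟨rfl, hr'⟩
  exact ⟨hr.symm.trans hr', hq.symm.trans hq'⟩

theorem grayVal_injective : ∀ {d : ℕ}, Function.Injective (grayVal n d)
  | 0, t, t', _ => funext fun i => i.elim0
  | d + 1, t, t', h => by
    induction t using Fin.consCases with | cons a s =>
    induction t' using Fin.consCases with | cons a' s' =>
    rw [grayVal_cons, grayVal_cons] at h
    obtain ⟨hdigit, hrest⟩ :=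
      eq_and_eq_of_add_mul_eq (reflectDigit_lt a.isLt) (reflectDigit_lt a'.isLt) h
    obtain rfl := grayVal_injective hrest
    rw [Fin.ext (reflectDigit_inj a.isLt a'.isLt hdigit)]

theorem gridAdj_of_grayVal_eq_succ :
    ∀ {d : ℕ} {t t' : Fin d → Fin n}, grayVal n d t' = grayVal n d t + 1 → GridAdj t t'
  | 0, t, t', h => by simp [grayVal] at h
  | d + 1, t, t', h => by
    induction t using Fin.consCases with | cons a s =>
    induction t' using Fin.consCases with | cons a' s' =>
    rw [grayVal_cons, grayVal_cons] at h
    have hr := reflectDigit_lt (p := ∑ j, (s j : ℕ)) a.isLt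
    have hr' := reflectDigit_lt (p := ∑ j, (s' j : ℕ)) a'.isLt
    by_cases hcarry : reflectDigit n (∑ j, (s j : ℕ)) a + 1 < n
    · obtain ⟨hdigit, hrest⟩ :=
        eq_and_eq_of_add_mul_eq (q := grayVal n d s') (q' := grayVal n d s) hr' hcarry (by omega)
      obtain rfl := grayVal_injective hrest
      exact GridAdj.cons_right _ (reflectDigit_eq_succ a.isLt a'.isLt hdigit)
    · obtain ⟨hdigit, hrest⟩ :=
        eq_and_eq_of_add_mul_eq (q := grayVal n d s') (q' := grayVal n d s + 1) hr' a.pos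
          (by rw [mul_add, mul_one]; omega)
      have hs := gridAdj_of_grayVal_eq_succ hrest
      obtain rfl := Fin.ext (reflectDigit_wrap a.isLt a'.isLt hs.even_sum_iff_not (by omega) hdigit)
      exact hs.cons_left a

theorem grayVal_succ_adjacent_general (n d : ℕ)
    (t t' : Fin d → Fin n)
    (hsucc : grayVal n d t' = grayVal n d t + 1) :
    ∃ i : Fin d, (∀ j : Fin d, j ≠ i → t j = t' j) ∧
      (((t i : ℤ) - (t' i : ℤ) = 1) ∨ ((t' i : ℤ) - (t i : ℤ) = 1)) :=
  gridAdj_of_grayVal_eq_succ hsucc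

/-- Consecutive Gray code words differ in exactly one coordinate, and in that
coordinate they differ by exactly `1`. -/
theorem grayVal_succ_adjacent (n d : ℕ) (hn : 2 ≤ n) (hd : 1 ≤ d)
    (t t' : Fin d → Fin n)
    (hsucc : grayVal n d t' = grayVal n d t + 1)
    (hlt : grayVal n d t + 1 < n ^ d) :
    ∃ i : Fin d, (∀ j : Fin d, j ≠ i → t j = t' j) ∧
      (((t i : ℤ) - (t' i : ℤ) = 1) ∨ ((t' i : ℤ) - (t i : ℤ) = 1)) :=
  grayVal_succ_adjacent_general n d t t' hsucc
end

section
/- Let X ⊆ Σ^(ℤ²) be an SFT defined by forbidden patterns of radius r. A configuration c with periodicity vector (m,n), m ≥ n ≥ 0, m > 0, is in X if and only if the corresponding bi-infinite sequence of strip-patterns (Pᵢ)_{i∈ℤ}, where Pᵢ is the restriction of c(· + (0,4r·i)) to S_{m,n}, is a bi-infinite path in the graph G_{m,n}(X) whose vertices are the (m,n)-periodic valid patterns of support S_{m,n} and whose edges are pairs (P,P') such that the combined pattern P ⊖ P' on D_{m,n} contains no forbidden pattern. -/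
/-- The square window of radius `r` around the origin. -/
def Ball (r : ℤ) : Type :=
  {p : ℤ × ℤ // -r ≤ p.1 ∧ p.1 ≤ r ∧ -r ≤ p.2 ∧ p.2 ≤ r}

/-- The strip `S_{m,n}` (with parameter `k` giving the width `k·m·r`). -/
def inStrip (m n r k : ℤ) (q : ℤ × ℤ) : Prop :=
  0 ≤ -n * q.1 + m * q.2 ∧ -n * q.1 + m * q.2 < k * m * r

instance (m n r k : ℤ) (q : ℤ × ℤ) : Decidable (inStrip m n r k q) :=
  inferInstanceAs (Decidable (_ ∧ _))

/-- The combined pattern `P ⊖ P'` on the double strip `D_{m,n}`: equal to `P`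
on `S_{m,n}` and to `P'(· - (0,4r))` elsewhere. -/
def combined (m n r : ℤ) {A : Type*} (P P' : ℤ × ℤ → A) (q : ℤ × ℤ) : A :=
  if inStrip m n r 4 q then P q else P' (q - (0, 4 * r))

lemma combined_eq {A : Type*} (m n r i : ℤ) (c : ℤ × ℤ → A) (q : ℤ × ℤ) :
    combined m n r (fun q => c (q + (0, 4 * r * i)))
      (fun q => c (q + (0, 4 * r * (i + 1)))) q = c (q + (0, 4 * r * i)) := by
  unfold combined
  split
  · rfl
  · have hq : q - (0, 4 * r) + (0, 4 * r * (i + 1)) = q + (0, 4 * r * i) := by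
      obtain ⟨a, b⟩ := q
      simp only [Prod.mk_sub_mk, Prod.mk_add_mk, Prod.mk.injEq]
      constructor <;> ring
    exact congrArg c hq

/-- An `(m,n)`-periodic configuration `c` belongs to the SFT defined by the
radius-`r` forbidden family `F` iff the sequence of its strip patterns
`Pᵢ = c(· + (0,4r·i))|_{S_{m,n}}` is a bi-infinite path in the strip graph
`G_{m,n}(X)`: each `Pᵢ` is an `(m,n)`-periodic vertex and each combined
pattern `Pᵢ ⊖ Pᵢ₊₁` contains no forbidden pattern inside `D_{m,n}`. -/
theorem sft_membership_iff_strip_path {A : Type*} [Fintype A]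
    (m n r : ℤ) (hr : 0 < r) (hm : 0 < m) (hn : 0 ≤ n) (hnm : n ≤ m)
    (F : Set (Ball r → A)) (c : ℤ × ℤ → A)
    (hper : ∀ z, c (z + (m, n)) = c z) :
    (∀ t : ℤ × ℤ, (fun z : Ball r => c (t + z.1)) ∉ F) ↔
      (∀ (i : ℤ) (q : ℤ × ℤ),
          c (q + (m, n) + (0, 4 * r * i)) = c (q + (0, 4 * r * i))) ∧
      (∀ (i : ℤ) (t : ℤ × ℤ),
        (∀ z : Ball r, inStrip m n r 8 (t + z.1)) →
        (fun z : Ball r =>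
            combined m n r (fun q => c (q + (0, 4 * r * i)))
              (fun q => c (q + (0, 4 * r * (i + 1)))) (t + z.1)) ∉ F) := by
  constructor
  · intro H
    constructor
    · intro i q
      rw [add_right_comm]
      exact hper _
    · intro i t _ hmem
      apply H (t + (0, 4 * r * i))
      have : (fun z : Ball r => c (t + (0, 4 * r * i) + z.1)) =
          (fun z : Ball r =>
            combined m n r (fun q => c (q + (0, 4 * r * i)))
              (fun q => c (q + (0, 4 * r * (i + 1)))) (t + z.1)) := by
        funext z
        rw [combined_eq, add_right_comm]
      rw [this]; exact hmem
  · rintro ⟨-, hpath⟩ t hmem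
    set V : ℤ := -n * t.1 + m * t.2 with hVdef
    set i : ℤ := (V - 2 * m * r) / (4 * m * r) with hidef
    have hpos : (0 : ℤ) < 4 * m * r := by positivity
    have hmod1 : 0 ≤ (V - 2 * m * r) % (4 * m * r) := Int.emod_nonneg _ (by positivity)
    have hmod2 : (V - 2 * m * r) % (4 * m * r) < 4 * m * r := Int.emod_lt_of_pos _ hpos
    have hdiv : V - 2 * m * r = 4 * m * r * i + (V - 2 * m * r) % (4 * m * r) :=
      (Int.mul_ediv_add_emod _ _).symm
    set s : ℤ := (V - 2 * m * r) % (4 * m * r) with hsdef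
    apply hpath i (t - (0, 4 * r * i))
    · rintro ⟨⟨z1, z2⟩, hz1l, hz1u, hz2l, hz2u⟩
      have h1 : n * z1 ≤ m * r := by nlinarith
      have h2 : -(m * r) ≤ n * z1 := by nlinarith
      have h3 : m * z2 ≤ m * r := by nlinarith
      have h4 : -(m * r) ≤ m * z2 := by nlinarith
      constructor
      · show (0 : ℤ) ≤ -n * (t.1 - 0 + z1) + m * (t.2 - 4 * r * i + z2)
        nlinarith [hdiv, hmod1]
      · show -n * (t.1 - 0 + z1) + m * (t.2 - 4 * r * i + z2) < 8 * m * r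
        nlinarith [hdiv, hmod2]
    · have : (fun z : Ball r =>
          combined m n r (fun q => c (q + (0, 4 * r * i)))
            (fun q => c (q + (0, 4 * r * (i + 1)))) (t - (0, 4 * r * i) + z.1)) =
          (fun z : Ball r => c (t + z.1)) := by
        funext z
        rw [combined_eq]
        congr 1
        abel
      rw [this]; exact hmem
end

section
/- Let X be a two-dimensional SFT of radius r over alphabet Σ. If X contains a configuration with periodicity vector (m,n) where m ≥ n > 0, then X contains a fully periodic configuration having both (m,n) and (0,p) as periodicity vectors, for some p with 0 < p ≤ |Σ|^(4rm). -/
/-!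
Slice `ℤ²` along the direction `(m, n)`: the level of `z` is `⌊(m z₂ - n z₁) / m⌋`, which is
invariant under `(m, n)` and raised by `t` under `(0, t)`. Modulo `(m, n)`, the `4r` consecutive
levels starting at `k` hold `4rm` cells, so among the starting levels `0, …, |Σ|^(4rm)` two, `k`
and `k + p`, carry the same contents; hence `c` is `(0, p)`-periodic on the strip at level `k`.
Because `n ≤ m`, every `r`-window meets at most `4r + 1` consecutive levels. Repeating the levels
`k, …, k + p - 1` of `c` periodically gives a configuration with periods `(m, n)` and `(0, p)`, and
its windows are windows of `c` thanks to the vertical periodicity on the strip.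
-/

open Function Set

section Level

variable {m n : ℕ}

-- Integer division rounds down here, as `m > 0` in every use.
def level (m n : ℕ) (z : ℤ × ℤ) : ℤ := (z.2 * m - z.1 * n) / m

lemma level_add_vertical (hm : 0 < m) (z : ℤ × ℤ) (t : ℤ) :
    level m n (z + (0, t)) = level m n z + t := by
  have hm' : (m : ℤ) ≠ 0 := by exact_mod_cast hm.ne'
  simp only [level, Prod.fst_add, Prod.snd_add, add_zero]
  rw [← Int.add_mul_ediv_right _ _ hm']
  ring_nf

lemma level_periodic : Periodic (level m n) ((m : ℤ), (n : ℤ)) := by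
  intro z
  simp only [level, Prod.fst_add, Prod.snd_add]
  ring_nf

lemma level_add_mem_Icc (hm : 0 < m) (hnm : n ≤ m) {r : ℤ} (t : ℤ × ℤ) (u : Ball r) :
    level m n (t + u.1) ∈ Icc (level m n (t + (r, -r))) (level m n (t + (r, -r)) + 4 * r) := by
  obtain ⟨u, hu₁, hu₂, hu₃, hu₄⟩ := u
  have hm' : (0 : ℤ) < m := by exact_mod_cast hm
  have hnm' : (n : ℤ) ≤ m := by exact_mod_cast hnm
  have hn' : (0 : ℤ) ≤ n := by positivity
  simp only [level, Prod.fst_add, Prod.snd_add]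
  constructor
  · exact Int.ediv_le_ediv hm' (by nlinarith)
  · rw [← Int.add_mul_ediv_right _ _ hm'.ne']
    exact Int.ediv_le_ediv hm' (by nlinarith)

end Level

section Strip

variable {A : Type*} {m n h : ℕ}

-- Modulo `(m, n)`, every point of level in `[k, k + h)` is one of the points listed here
-- (column `x.1`, level `k + x.2`).
def strip (m n h : ℕ) (c : ℤ × ℤ → A) (k : ℤ) (x : Fin m × Fin h) : A :=
  c (x.1, k + x.2 - level m n (x.1, 0))

lemma exists_eq_strip_point_add_zsmul (hm : 0 < m) {k : ℤ} {w : ℤ × ℤ}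
    (hw : level m n w ∈ Ico k (k + h)) :
    ∃ (x : Fin m × Fin h) (ℓ : ℤ),
      w = ((x.1 : ℤ), k + x.2 - level m n (x.1, 0)) + ℓ • ((m : ℤ), (n : ℤ)) := by
  have hm' : (0 : ℤ) < m := by exact_mod_cast hm
  obtain ⟨ℓ, i, hi₀, him, hw₁⟩ : ∃ ℓ i : ℤ, 0 ≤ i ∧ i < m ∧ w.1 = i + ℓ * m :=
    ⟨w.1 / m, w.1 % m, Int.emod_nonneg _ hm'.ne', Int.emod_lt_of_pos _ hm',
      by linarith [Int.emod_add_mul_ediv w.1 m]⟩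
  have hlevel : level m n w = level m n (i, 0) + (w.2 - ℓ * n) := by
    have hw : w = ((i, 0) + (0, w.2 - ℓ * n)) + ℓ • ((m : ℤ), (n : ℤ)) := by
      ext <;> simp [hw₁]
    conv_lhs => rw [hw]
    rw [level_periodic.zsmul, level_add_vertical hm]
  have hb := Int.toNat_of_nonneg (sub_nonneg.mpr hw.1)
  refine ⟨(⟨i.toNat, by omega⟩, ⟨(level m n w - k).toNat, by linarith [hw.2]⟩), ℓ, ?_⟩
  ext <;> simp [Int.toNat_of_nonneg hi₀, hb, hw₁]
  linarith

lemma apply_add_vertical_of_strip_eq (hm : 0 < m) {c : ℤ × ℤ → A}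
    (hc : Periodic c ((m : ℤ), (n : ℤ))) {k p : ℤ}
    (hs : strip m n h c (k + p) = strip m n h c k) {w : ℤ × ℤ}
    (hw : level m n w ∈ Ico k (k + h)) : c (w + (0, p)) = c w := by
  obtain ⟨x, ℓ, rfl⟩ := exists_eq_strip_point_add_zsmul hm hw
  have hx := congrFun hs x
  rw [add_right_comm, hc.zsmul, hc.zsmul]
  simp only [strip] at hx
  rw [← hx, Prod.mk_add_mk, add_zero]
  congr 2
  ring

end Strip

lemma exists_map_add_eq {β : Type*} [Fintype β] (f : ℤ → β) :
    ∃ (k : ℤ) (p : ℕ), 0 < p ∧ p ≤ Fintype.card β ∧ f (k + p) = f k := by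
  obtain ⟨i, j, hij, hf⟩ :=
    Fintype.exists_ne_map_eq_of_card_lt (fun i : Fin (Fintype.card β + 1) => f (i : ℕ)) (by simp)
  wlog hlt : i < j generalizing i j
  · exact this j i hij.symm hf.symm (hij.symm.lt_of_le (not_lt.mp hlt))
  refine ⟨(i : ℕ), (j : ℕ) - i, by omega, by omega, ?_⟩
  rw [Nat.cast_sub hlt.le, add_sub_cancel]
  exact hf.symm

section VerticalFold

variable {A : Type*} {m n : ℕ} {c : ℤ × ℤ → A} {k p h : ℤ}

-- The configuration whose row at level `ℓ` is the row of `c` at level `k + (ℓ - k) % p`.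
def verticalFold (m n : ℕ) (c : ℤ × ℤ → A) (k p : ℤ) (z : ℤ × ℤ) : A :=
  c (z - (0, (level m n z - k) / p * p))

lemma verticalFold_periodic (hc : Periodic c ((m : ℤ), (n : ℤ))) :
    Periodic (verticalFold m n c k p) ((m : ℤ), (n : ℤ)) := by
  intro z
  rw [verticalFold, verticalFold, level_periodic, add_sub_right_comm, hc]

lemma verticalFold_periodic_vertical (hm : 0 < m) (hp : p ≠ 0) :
    Periodic (verticalFold m n c k p) (0, p) := by
  intro z
  simp only [verticalFold, level_add_vertical hm]
  rw [show level m n z + p - k = level m n z - k + 1 * p by ring, Int.add_mul_ediv_right _ _ hp]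
  congr 1
  ext <;> simp; ring

lemma apply_add_vertical_mul_eq (hm : 0 < m) (hp : 0 ≤ p)
    (H : ∀ w, level m n w ∈ Ico k (k + h) → c (w + (0, p)) = c w) :
    ∀ (j : ℕ) {w : ℤ × ℤ}, k ≤ level m n w → level m n w + j * p < k + p + h →
      c (w + (0, j * p)) = c w
  | 0, w, _, _ => by simp [Prod.mk_zero_zero]
  | j + 1, w, hk, hw => by
    have hw' : level m n (w + (0, j * p)) ∈ Ico k (k + h) := by
      rw [level_add_vertical hm]; push_cast at hw; constructor <;> nlinarith
    have hshift : w + (0, ((j + 1 : ℕ) : ℤ) * p) = w + (0, j * p) + (0, p) := by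
      ext <;> simp; ring
    rw [hshift, H _ hw', apply_add_vertical_mul_eq hm hp H j hk (by push_cast at hw; linarith)]

lemma verticalFold_eq_of_level_mem (hm : 0 < m) (hp : 0 < p)
    (H : ∀ w, level m n w ∈ Ico k (k + h) → c (w + (0, p)) = c w) {K : ℤ} {z : ℤ × ℤ}
    (hz : level m n z ∈ Icc K (K + h)) :
    verticalFold m n c k p z = c (z - (0, (K - k) / p * p)) := by
  set d := (level m n z - k) / p
  set d₀ := (K - k) / p
  have hd : d₀ ≤ d := Int.ediv_le_ediv hp (by linarith [hz.1])
  have hz' : z - (0, d₀ * p) = z - (0, d * p) + (0, ((d - d₀).toNat : ℤ) * p) := by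
    rw [Int.toNat_of_nonneg (sub_nonneg.mpr hd)]
    ext <;> simp; ring
  have hlevel : level m n (z - (0, d * p)) = k + (level m n z - k) % p := by
    rw [sub_eq_add_neg, Prod.neg_mk, neg_zero, level_add_vertical hm]
    linarith [Int.emod_add_mul_ediv (level m n z - k) p]
  rw [verticalFold, hz', apply_add_vertical_mul_eq hm hp.le H]
  · rw [hlevel]; linarith [Int.emod_nonneg (level m n z - k) hp.ne']
  · rw [hlevel, Int.toNat_of_nonneg (sub_nonneg.mpr hd)]
    nlinarith [hz.2, Int.emod_add_mul_ediv (level m n z - k) p, Int.emod_add_mul_ediv (K - k) p,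
      Int.emod_lt_of_pos (K - k) hp]

end VerticalFold

theorem fully_periodic_with_bound_general {A : Type*} [Fintype A]
    (m n r : ℕ) (hn : 0 < n) (hnm : n ≤ m)
    (F : Set (Ball (r : ℤ) → A)) (c : ℤ × ℤ → A)
    (hc : ∀ t : ℤ × ℤ, (fun z : Ball (r : ℤ) => c (t + z.1)) ∉ F)
    (hper : ∀ z, c (z + ((m : ℤ), (n : ℤ))) = c z) :
    ∃ c' : ℤ × ℤ → A,
      (∀ t : ℤ × ℤ, (fun z : Ball (r : ℤ) => c' (t + z.1)) ∉ F) ∧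
      ∃ p : ℕ, 0 < p ∧ p ≤ Fintype.card A ^ (4 * r * m) ∧
        (∀ z, c' (z + ((m : ℤ), (n : ℤ))) = c' z) ∧
        (∀ z, c' (z + (0, (p : ℤ))) = c' z) := by
  have hm : 0 < m := hn.trans_le hnm
  obtain ⟨k, p, hp, hpN, hs⟩ := exists_map_add_eq (strip m n (4 * r) c)
  have hcard : Fintype.card (Fin m × Fin (4 * r) → A) = Fintype.card A ^ (4 * r * m) := by
    simp [mul_comm]
  have hp' : (0 : ℤ) < p := by exact_mod_cast hp
  have H : ∀ w, level m n w ∈ Ico k (k + 4 * r) → c (w + (0, (p : ℤ))) = c w := fun w hw =>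
    apply_add_vertical_of_strip_eq hm hper hs (by exact_mod_cast hw)
  refine ⟨verticalFold m n c k p, fun t => ?_, p, hp, hcard ▸ hpN, verticalFold_periodic hper,
    verticalFold_periodic_vertical hm hp'.ne'⟩
  set K := level m n (t + ((r : ℤ), -(r : ℤ)))
  have hwindow : (fun u : Ball r => verticalFold m n c k p (t + u.1)) =
      fun u => c (t - (0, (K - k) / p * p) + u.1) := by
    funext u
    rw [verticalFold_eq_of_level_mem hm hp' H (level_add_mem_Icc hm hnm t u),
      sub_add_eq_add_sub]
  rw [hwindow]
  exact hc _

/-- If a 2D SFT of radius `r` contains a configuration with periodicity vector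
`(m,n)`, `m ≥ n > 0`, then it contains a fully periodic configuration with
periods `(m,n)` and `(0,p)` for some `0 < p ≤ |Σ|^(4rm)`. -/
theorem fully_periodic_with_bound {A : Type*} [Fintype A]
    (m n r : ℕ) (hr : 0 < r) (hn : 0 < n) (hnm : n ≤ m)
    (F : Set (Ball (r : ℤ) → A)) (c : ℤ × ℤ → A)
    (hc : ∀ t : ℤ × ℤ, (fun z : Ball (r : ℤ) => c (t + z.1)) ∉ F)
    (hper : ∀ z, c (z + ((m : ℤ), (n : ℤ))) = c z) :
    ∃ c' : ℤ × ℤ → A,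
      (∀ t : ℤ × ℤ, (fun z : Ball (r : ℤ) => c' (t + z.1)) ∉ F) ∧
      ∃ p : ℕ, 0 < p ∧ p ≤ Fintype.card A ^ (4 * r * m) ∧
        (∀ z, c' (z + ((m : ℤ), (n : ℤ))) = c' z) ∧
        (∀ z, c' (z + (0, (p : ℤ))) = c' z) :=
  fully_periodic_with_bound_general m n r hn hnm F c hc hper
end
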